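/- arXiv:2111.08812 — 7 statements merged into one kernel-verified Lean document; each statement's English description precedes it below -/
import Mathlib

section
/- For all n ≥ 0 and l > 0, and any d, the identity (1/2)[k(d,m-1) + c(d,m) - g(d,m)] = Σ_i C(2^{n+1}-2, d-1-2i)·C(l-1, i) holds, where with m = 2^{n+1}-1+2l we set g(d,m) = Σ_i C(2^{n+1}-1, d-2i)·C(l, i), k(d,m-1) = Σ_i C(2^{n+1}, d-2i)·C(l-1, i), and c(d,m) = Σ_i C(2^{n+1}-2, d-1-2i)·C(l, i). -/
open Finset

private def Sbl (a b d : ℕ) : ℕ :=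
  ∑ i ∈ range (d + 1), if 2 * i ≤ d then Nat.choose a (d - 2 * i) * Nat.choose b i else 0

private lemma Sbl_zero (a b : ℕ) : Sbl a b 0 = 1 := by simp [Sbl]

private lemma Sbl_one (a b : ℕ) : Sbl a b 1 = a := by
  simp [Sbl, Finset.sum_range_succ]

private lemma Sbl_two (a b : ℕ) : Sbl a b 2 = Nat.choose a 2 + b := by
  simp [Sbl, Finset.sum_range_succ]

/-- Pascal recurrence in the first argument. -/
private lemma P1 (a b d : ℕ) : Sbl (a + 1) b (d + 1) = Sbl a b (d + 1) + Sbl a b d := by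
  have h : ∀ i ∈ range (d + 2),
      (if 2 * i ≤ d + 1 then Nat.choose (a + 1) (d + 1 - 2 * i) * Nat.choose b i else 0)
      = (if 2 * i ≤ d + 1 then Nat.choose a (d + 1 - 2 * i) * Nat.choose b i else 0)
        + (if 2 * i ≤ d then Nat.choose a (d - 2 * i) * Nat.choose b i else 0) := by
    intro i _
    rcases le_or_gt (2 * i) d with h1 | h1
    · rw [if_pos (by omega), if_pos (by omega), if_pos h1]
      have hd : d + 1 - 2 * i = (d - 2 * i) + 1 := by omega
      rw [hd, Nat.choose_succ_succ']
      ring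
    · rcases le_or_gt (2 * i) (d + 1) with h2 | h2
      · have hd : d + 1 - 2 * i = 0 := by omega
        rw [if_pos h2, if_pos h2, if_neg (by omega), hd]
        simp
      · rw [if_neg (by omega), if_neg (by omega), if_neg (by omega)]
  unfold Sbl
  rw [Finset.sum_congr rfl h, Finset.sum_add_distrib]
  congr 1
  rw [Finset.sum_range_succ, if_neg (by omega), add_zero]

/-- Pascal recurrence in the second argument. -/
private lemma P2 (a b d : ℕ) : Sbl a (b + 1) (d + 2) = Sbl a b (d + 2) + Sbl a b d := by
  have h : ∀ i ∈ range (d + 3),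
      (if 2 * i ≤ d + 2 then Nat.choose a (d + 2 - 2 * i) * Nat.choose (b + 1) i else 0)
      = (if 2 * i ≤ d + 2 then Nat.choose a (d + 2 - 2 * i) * Nat.choose b i else 0)
        + (if 1 ≤ i ∧ 2 * i ≤ d + 2 then
            Nat.choose a (d + 2 - 2 * i) * Nat.choose b (i - 1) else 0) := by
    intro i _
    rcases Nat.eq_zero_or_pos i with rfl | hi
    · simp
    · obtain ⟨j, rfl⟩ : ∃ j, i = j + 1 := ⟨i - 1, by omega⟩
      rcases le_or_gt (2 * (j + 1)) (d + 2) with h2 | h2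
      · rw [if_pos h2, if_pos h2, if_pos ⟨by omega, h2⟩, Nat.choose_succ_succ]
        simp
        ring
      · rw [if_neg (by omega), if_neg (by omega), if_neg (by omega)]
  unfold Sbl
  rw [Finset.sum_congr rfl h, Finset.sum_add_distrib]
  congr 1
  rw [Finset.sum_range_succ']
  have h0 : (if 1 ≤ 0 ∧ 2 * 0 ≤ d + 2 then
      Nat.choose a (d + 2 - 2 * 0) * Nat.choose b (0 - 1) else 0) = 0 := by
    simp
  rw [h0, add_zero, Finset.sum_range_succ, if_neg (by omega), add_zero]
  apply Finset.sum_congr rfl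
  intro j _
  have hiff : (1 ≤ j + 1 ∧ 2 * (j + 1) ≤ d + 2) ↔ (2 * j ≤ d) := by omega
  have hsub : d + 2 - 2 * (j + 1) = d - 2 * j := by omega
  simp only [hiff, hsub, Nat.add_sub_cancel]

/-- The key identity in ℕ. -/
private lemma key (A b d : ℕ) :
    Sbl (A + 2) b (d + 1) + Sbl A (b + 1) d
      = Sbl (A + 1) (b + 1) (d + 1) + 2 * Sbl A b d := by
  match d with
  | 0 =>
      simp [Sbl_zero, Sbl_one]
  | 1 =>
      rw [show A + 2 = (A + 1) + 1 from rfl, Sbl_two, Sbl_two, Sbl_one, Sbl_one,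
        Nat.choose_succ_succ (A + 1) 1]
      simp [Nat.choose_one_right]
      omega
  | (e + 2) =>
      show Sbl (A + 2) b (e + 3) + Sbl A (b + 1) (e + 2)
        = Sbl (A + 1) (b + 1) (e + 3) + 2 * Sbl A b (e + 2)
      have e1 : Sbl (A + 2) b (e + 3) = Sbl (A + 1) b (e + 3) + Sbl (A + 1) b (e + 2) :=
        P1 (A + 1) b (e + 2)
      have e2 : Sbl (A + 1) b (e + 3) = Sbl A b (e + 3) + Sbl A b (e + 2) := P1 A b (e + 2)
      have e3 : Sbl (A + 1) b (e + 2) = Sbl A b (e + 2) + Sbl A b (e + 1) := P1 A b (e + 1)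
      have e4 : Sbl A (b + 1) (e + 2) = Sbl A b (e + 2) + Sbl A b e := P2 A b e
      have e5 : Sbl (A + 1) (b + 1) (e + 3) = Sbl A (b + 1) (e + 3) + Sbl A (b + 1) (e + 2) :=
        P1 A (b + 1) (e + 2)
      have e6 : Sbl A (b + 1) (e + 3) = Sbl A b (e + 3) + Sbl A b (e + 1) := P2 A b (e + 1)
      omega

/-- Convert the "shifted" sums in the theorem to `Sbl`. -/
private lemma T_eq (a b d : ℕ) :
    (∑ i ∈ range (d + 1 + 1), if 2 * i + 1 ≤ d + 1 then
        Nat.choose a (d + 1 - 1 - 2 * i) * Nat.choose b i else 0) = Sbl a b d := by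
  unfold Sbl
  rw [Finset.sum_range_succ, if_neg (by omega), add_zero]
  apply Finset.sum_congr rfl
  intro i _
  have hiff : (2 * i + 1 ≤ d + 1) ↔ (2 * i ≤ d) := by omega
  simp only [hiff, Nat.add_sub_cancel]

/-- Lemma 5.2 (boundary lemma): for `m = 2^{n+1}-1+2l` with `l > 0`,
`(1/2)[k^G_n(d,m-1) + k̄^C_n(d,m) - k^G_n(d,m)] = ∑_i C(2^{n+1}-2, d-1-2i)·C(l-1, i)`. -/
theorem boundary_lemma (n d l : ℕ) (hl : 0 < l) :
    (1 / 2 : ℚ) *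
      (((∑ i ∈ range (d + 1), if 2 * i ≤ d then
            Nat.choose (2 ^ (n + 1)) (d - 2 * i) * Nat.choose (l - 1) i else 0 : ℕ) : ℚ)
        + ((∑ i ∈ range (d + 1), if 2 * i + 1 ≤ d then
            Nat.choose (2 ^ (n + 1) - 2) (d - 1 - 2 * i) * Nat.choose l i else 0 : ℕ) : ℚ)
        - ((∑ i ∈ range (d + 1), if 2 * i ≤ d then
            Nat.choose (2 ^ (n + 1) - 1) (d - 2 * i) * Nat.choose l i else 0 : ℕ) : ℚ))
    = ((∑ i ∈ range (d + 1), if 2 * i + 1 ≤ d then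
          Nat.choose (2 ^ (n + 1) - 2) (d - 1 - 2 * i) * Nat.choose (l - 1) i else 0 : ℕ) : ℚ) := by
  obtain ⟨b, rfl⟩ : ∃ b, l = b + 1 := ⟨l - 1, by omega⟩
  have hb : b + 1 - 1 = b := rfl
  have h2 : 2 ≤ 2 ^ (n + 1) := by
    calc 2 = 2 ^ 1 := rfl
    _ ≤ 2 ^ (n + 1) := Nat.pow_le_pow_right (by norm_num) (by omega)
  set A := 2 ^ (n + 1) - 2 with hA
  have hA2 : 2 ^ (n + 1) = A + 2 := by omega
  have hA1 : 2 ^ (n + 1) - 1 = A + 1 := by omega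
  match d with
  | 0 =>
      simp
  | (d' + 1) =>
      have s1 : (∑ i ∈ range (d' + 1 + 1), if 2 * i ≤ d' + 1 then
            Nat.choose (2 ^ (n + 1)) (d' + 1 - 2 * i) * Nat.choose (b + 1 - 1) i else 0)
          = Sbl (A + 2) b (d' + 1) := by
        rw [hb, hA2]; rfl
      have s2 : (∑ i ∈ range (d' + 1 + 1), if 2 * i + 1 ≤ d' + 1 then
            Nat.choose (2 ^ (n + 1) - 2) (d' + 1 - 1 - 2 * i) * Nat.choose (b + 1) i else 0)
          = Sbl A (b + 1) d' := by
        rw [← hA]; exact T_eq A (b + 1) d'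
      have s3 : (∑ i ∈ range (d' + 1 + 1), if 2 * i ≤ d' + 1 then
            Nat.choose (2 ^ (n + 1) - 1) (d' + 1 - 2 * i) * Nat.choose (b + 1) i else 0)
          = Sbl (A + 1) (b + 1) (d' + 1) := by
        rw [hA1]; rfl
      have s4 : (∑ i ∈ range (d' + 1 + 1), if 2 * i + 1 ≤ d' + 1 then
            Nat.choose (2 ^ (n + 1) - 2) (d' + 1 - 1 - 2 * i) * Nat.choose (b + 1 - 1) i else 0)
          = Sbl A b d' := by
        rw [hb, ← hA]; exact T_eq A b d'
      rw [s1, s2, s3, s4]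
      have hk := key A b d'
      have hkQ : ((Sbl (A + 2) b (d' + 1) : ℕ) : ℚ) + ((Sbl A (b + 1) d' : ℕ) : ℚ)
          = ((Sbl (A + 1) (b + 1) (d' + 1) : ℕ) : ℚ) + 2 * ((Sbl A b d' : ℕ) : ℚ) := by
        exact_mod_cast congrArg (Nat.cast : ℕ → ℚ) hk
      linarith
end

section
/- With w̄_k defined in Z/2[w_1,w_2] by the recursion w̄_0 = 1, w̄_1 = w_1, w̄_k = w_1·w̄_{k-1} + w_2·w̄_{k-2}, one has for all j, k ≥ 0: w_2^j · w̄_k = Σ_i C(j,i)·w_1^{j-i}·w̄_{k+j+i} in Z/2[w_1,w_2], where C(j,i) is reduced mod 2. -/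
open Finset MvPolynomial

/-- The dual Stiefel–Whitney classes in `Z/2[w₁,w₂]`: `w̄_0 = 1`, `w̄_1 = w₁`,
`w̄_k = w₁·w̄_{k-1} + w₂·w̄_{k-2}`.  Here `X 0 = w₁` and `X 1 = w₂`. -/
noncomputable def wbar : ℕ → MvPolynomial (Fin 2) (ZMod 2)
  | 0 => 1
  | 1 => X 0
  | (k + 2) => X 0 * wbar (k + 1) + X 1 * wbar k

local notation "R" => MvPolynomial (Fin 2) (ZMod 2)

lemma wbar_key (k : ℕ) :
    (X 1 : R) * wbar k = X 0 * wbar (k + 1) + wbar (k + 2) := by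
  have h2 : (2 : R) = 0 := by
    exact_mod_cast CharP.cast_eq_zero R 2
  rw [show wbar (k + 2) = X 0 * wbar (k + 1) + X 1 * wbar k from rfl]
  linear_combination (-(X 0 * wbar (k + 1))) * h2

/-- Lemma 5.1(b): `w₂^j · w̄_k = ∑_{i=0}^{j} C(j,i)·w₁^{j-i}·w̄_{k+j+i}` in `Z/2[w₁,w₂]`. -/
theorem wbar_mul_w2_pow (j k : ℕ) :
    (X 1 : MvPolynomial (Fin 2) (ZMod 2)) ^ j * wbar k
      = ∑ i ∈ range (j + 1),
          (Nat.choose j i : MvPolynomial (Fin 2) (ZMod 2)) * X 0 ^ (j - i) * wbar (k + j + i) := by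
  induction j generalizing k with
  | zero => simp
  | succ j ih =>
    have hA : X 0 * (∑ i ∈ range (j+1), (j.choose i : R) * X 0 ^ (j - i) * wbar (k+1+j+i))
        = ∑ i ∈ range (j+1), (j.choose i : R) * X 0 ^ (j+1-i) * wbar (k+j+1+i) := by
      rw [Finset.mul_sum]
      refine Finset.sum_congr rfl fun i hi => ?_
      simp only [Finset.mem_range] at hi
      have h1 : j + 1 - i = (j - i) + 1 := by omega
      have h2 : k + 1 + j + i = k + j + 1 + i := by omega
      rw [h1, h2, pow_succ]; ring
    have hRHS : (∑ i ∈ range (j+1+1), ((j+1).choose i : R) * X 0 ^ (j+1-i) * wbar (k+(j+1)+i))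
        = (∑ i ∈ range (j+1), (j.choose i : R) * X 0 ^ (j+1-i) * wbar (k+j+1+i))
          + ∑ i ∈ range (j+1), (j.choose i : R) * X 0 ^ (j - i) * wbar (k+2+j+i) := by
      rw [Finset.sum_range_succ' _ (j+1)]
      have hsplit : ∀ i ∈ range (j+1),
          ((j+1).choose (i+1) : R) * X 0 ^ (j+1-(i+1)) * wbar (k+(j+1)+(i+1))
          = (j.choose (i+1) : R) * X 0 ^ (j+1-(i+1)) * wbar (k+j+1+(i+1))
            + (j.choose i : R) * X 0 ^ (j-i) * wbar (k+2+j+i) := by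
        intro i hi
        have h1 : j + 1 - (i+1) = j - i := by omega
        have h2 : k + (j+1) + (i+1) = k + j + 1 + (i + 1) := by omega
        have h3 : k + j + 1 + (i+1) = k + 2 + j + i := by omega
        rw [Nat.choose_succ_succ', Nat.cast_add, h1, h2, h3]; ring
      rw [Finset.sum_congr rfl hsplit, Finset.sum_add_distrib]
      have h4 : (∑ i ∈ range (j+1), (j.choose (i+1) : R) * X 0 ^ (j+1-(i+1)) * wbar (k+j+1+(i+1)))
            + ((j+1).choose 0 : R) * X 0 ^ (j+1-0) * wbar (k+(j+1)+0)
          = ∑ i ∈ range (j+1), (j.choose i : R) * X 0 ^ (j+1-i) * wbar (k+j+1+i) := by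
        have e0 : ((j+1).choose 0 : R) * X 0 ^ (j+1-0) * wbar (k+(j+1)+0)
            = (j.choose 0 : R) * X 0 ^ (j+1-0) * wbar (k+j+1+0) := by
          have e : k + (j+1) + 0 = k + j + 1 + 0 := by omega
          rw [e]; norm_num
        rw [e0,
          ← Finset.sum_range_succ' (fun i => (j.choose i : R) * X 0 ^ (j+1-i) * wbar (k+j+1+i)) (j+1),
          Finset.sum_range_succ]
        simp
      rw [← h4]; ring
    calc (X 1 : R) ^ (j+1) * wbar k = X 1 ^ j * (X 1 * wbar k) := by ring
      _ = X 0 * (X 1 ^ j * wbar (k+1)) + X 1 ^ j * wbar (k+2) := by rw [wbar_key]; ring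
      _ = _ := by rw [ih (k+1), ih (k+2), hA, hRHS]
end

section
/- With w̄_k ∈ Z/2[w_1,w_2] defined by w̄_0 = 1, w̄_1 = w_1, w̄_k = w_1·w̄_{k-1} + w_2·w̄_{k-2}, one has w̄_{2^b - 2} = Σ_{c=0}^{b-1} w_1^{2^b - 2^{c+1}}·w_2^{2^c - 1} for all b ≥ 1. -/
open Finset MvPolynomial

lemma two_eq_zero' : (2 : MvPolynomial (Fin 2) (ZMod 2)) = 0 := by
  haveI : CharP (MvPolynomial (Fin 2) (ZMod 2)) 2 := inferInstance
  exact_mod_cast CharP.cast_eq_zero (MvPolynomial (Fin 2) (ZMod 2)) 2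

lemma wbar_doubling (n : ℕ) :
    wbar (2 * n + 1) = X 0 * wbar n ^ 2 ∧
      wbar (2 * n + 2) = wbar (n + 1) ^ 2 + X 1 * wbar n ^ 2 := by
  induction n with
  | zero =>
    constructor
    · show wbar 1 = X 0 * wbar 0 ^ 2
      simp [wbar]
    · show wbar 2 = wbar 1 ^ 2 + X 1 * wbar 0 ^ 2
      simp [wbar]
      ring
  | succ n ih =>
    obtain ⟨hP, hQ⟩ := ih
    have hP' : wbar (2 * (n + 1) + 1) = X 0 * wbar (n + 1) ^ 2 := by
      have : 2 * (n + 1) + 1 = (2 * n + 1) + 2 := by ring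
      rw [this, wbar]
      have e1 : 2 * n + 1 + 1 = 2 * n + 2 := by ring
      rw [e1, hQ, hP]
      linear_combination (X 0 : MvPolynomial (Fin 2) (ZMod 2)) * X 1 * wbar n ^ 2 *
        two_eq_zero'
    refine ⟨hP', ?_⟩
    have : 2 * (n + 1) + 2 = (2 * n + 2) + 2 := by ring
    rw [this, wbar]
    have e1 : 2 * n + 2 + 1 = 2 * (n + 1) + 1 := by ring
    rw [e1, hP', hQ]
    have hw2 : wbar (n + 2) = X 0 * wbar (n + 1) + X 1 * wbar n := by rw [wbar]
    rw [hw2]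
    linear_combination (-(X 0 * X 1 * wbar (n + 1) * wbar n)) * two_eq_zero'

lemma wbar_odd (n : ℕ) : wbar (2 * n + 1) = X 0 * wbar n ^ 2 := (wbar_doubling n).1

lemma wbar_even (n : ℕ) : wbar (2 * n + 2) = wbar (n + 1) ^ 2 + X 1 * wbar n ^ 2 :=
  (wbar_doubling n).2

lemma wbar_two_pow_sub_one (b : ℕ) :
    wbar (2 ^ b - 1) = (X 0 : MvPolynomial (Fin 2) (ZMod 2)) ^ (2 ^ b - 1) := by
  induction b with
  | zero => simp [wbar]
  | succ b ih =>
    have h1 : 1 ≤ 2 ^ b := Nat.one_le_two_pow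
    have e1 : 2 ^ (b + 1) - 1 = 2 * (2 ^ b - 1) + 1 := by
      rw [pow_succ]; omega
    rw [e1, wbar_odd, ih, ← pow_mul, ← pow_succ']
    congr 1
    omega

/-- Lemma 5.1(e): `w̄_{2^b - 2} = ∑_{c=0}^{b-1} w₁^{2^b - 2^{c+1}}·w₂^{2^c - 1}` for `b ≥ 1`. -/
theorem wbar_two_pow_sub_two (b : ℕ) (hb : 1 ≤ b) :
    wbar (2 ^ b - 2)
      = ∑ c ∈ range b,
          (X 0 : MvPolynomial (Fin 2) (ZMod 2)) ^ (2 ^ b - 2 ^ (c + 1)) * X 1 ^ (2 ^ c - 1) := by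
  induction b, hb using Nat.le_induction with
  | base => simp [wbar]
  | succ b hb ih =>
    have h2 : 2 ≤ 2 ^ b := by
      calc 2 = 2 ^ 1 := rfl
      _ ≤ 2 ^ b := Nat.pow_le_pow_right (by norm_num) hb
    have e1 : 2 ^ (b + 1) - 2 = 2 * (2 ^ b - 2) + 2 := by
      rw [pow_succ]; omega
    have e2 : 2 ^ b - 2 + 1 = 2 ^ b - 1 := by omega
    haveI : CharP (MvPolynomial (Fin 2) (ZMod 2)) 2 := inferInstance
    have hA : ((X 0 : MvPolynomial (Fin 2) (ZMod 2)) ^ (2 ^ b - 1)) ^ 2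
        = X 0 ^ (2 ^ (b + 1) - 2 ^ (0 + 1)) * X 1 ^ (2 ^ 0 - 1) := by
      have hp : (2 : ℕ) ^ (b + 1) = 2 ^ b * 2 := pow_succ 2 b
      have h0 : (2 : ℕ) ^ (0 + 1) = 2 := rfl
      have hE : 2 ^ (b + 1) - 2 ^ (0 + 1) = (2 ^ b - 1) * 2 := by omega
      rw [hE, ← pow_mul]
      norm_num
    have hS : ∀ c ∈ range b,
        X 1 * ((X 0 : MvPolynomial (Fin 2) (ZMod 2)) ^ (2 ^ b - 2 ^ (c + 1))
            * X 1 ^ (2 ^ c - 1)) ^ 2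
          = X 0 ^ (2 ^ (b + 1) - 2 ^ (c + 1 + 1)) * X 1 ^ (2 ^ (c + 1) - 1) := by
      intro c hc
      have hcb : c < b := Finset.mem_range.mp hc
      have hcle : 2 ^ (c + 1) ≤ 2 ^ b := Nat.pow_le_pow_right (by norm_num) hcb
      have hc1 : 1 ≤ 2 ^ c := Nat.one_le_two_pow
      have hp : (2 : ℕ) ^ (b + 1) = 2 ^ b * 2 := pow_succ 2 b
      have hp2 : (2 : ℕ) ^ (c + 1 + 1) = 2 ^ (c + 1) * 2 := pow_succ 2 (c + 1)
      have hp3 : (2 : ℕ) ^ (c + 1) = 2 ^ c * 2 := pow_succ 2 c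
      rw [mul_pow, ← pow_mul, ← pow_mul]
      have ex : (2 ^ b - 2 ^ (c + 1)) * 2 = 2 ^ (b + 1) - 2 ^ (c + 1 + 1) := by omega
      have ee : (2 ^ c - 1) * 2 + 1 = 2 ^ (c + 1) - 1 := by omega
      rw [ex, mul_left_comm, ← pow_succ', ee]
    rw [e1, wbar_even, e2, wbar_two_pow_sub_one, ih, CharTwo.sum_sq, Finset.mul_sum,
      Finset.sum_range_succ', Finset.sum_congr rfl hS, hA, add_comm]
end

section
/- For natural numbers b ≥ 0 and 0 ≤ j ≤ 2^b - 1 with 2j ≤ 2^b - 1, the binomial coefficient C(2^b - 1 - j, j) is odd if and only if j = 0. -/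
/- Lucas's theorem at `p = 2` peels off the last binary digits: `C(n, k) ≡ C(n % 2, k % 2) · C(n / 2, k / 2)`.
For `n = 2^(b+1) - 1 - j`, an odd `j` makes `n` even and the factor `C(0, 1)` vanishes, while `j = 2 j'`
makes `n` odd with `n / 2 = 2^b - 1 - j'`, so the parity of `C(n, j)` is that of `C(2^b - 1 - j', j')`. -/

theorem Nat.choose_mod_two (n k : ℕ) :
    n.choose k % 2 = (n % 2).choose (k % 2) * (n / 2).choose (k / 2) % 2 :=
  have : Fact (Nat.Prime 2) := ⟨Nat.prime_two⟩
  Choose.choose_modEq_choose_mod_mul_choose_div_nat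

theorem Nat.even_choose_two_pow_sub_one_sub_self {b j : ℕ} (hj : j ≠ 0) (h : 2 * j ≤ 2 ^ b - 1) :
    Even ((2 ^ b - 1 - j).choose j) := by
  induction b generalizing j with
  | zero => simp at h; contradiction
  | succ b ih =>
    have hpow : 2 ^ (b + 1) = 2 * 2 ^ b := by ring
    rw [Nat.even_iff, Nat.choose_mod_two]
    rcases Nat.even_or_odd j with ⟨j', rfl⟩ | hodd
    · have hhalf : (2 ^ (b + 1) - 1 - (j' + j')) / 2 = 2 ^ b - 1 - j' := by omega
      have hbit : (2 ^ (b + 1) - 1 - (j' + j')) % 2 = 1 := by omega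
      have := Nat.even_iff.mp (ih (j := j') (by omega) (by omega))
      rw [hhalf, hbit, show (j' + j') / 2 = j' by omega, show (j' + j') % 2 = 0 by omega]
      simpa using this
    · have hbit : (2 ^ (b + 1) - 1 - j) % 2 = 0 := by
        rw [Nat.odd_iff] at hodd; omega
      rw [hbit, Nat.odd_iff.mp hodd]
      simp

/-- Lucas-theorem computation for Lemma 5.1(d): for `0 ≤ j` with `2j ≤ 2^b - 1`,
`C(2^b - 1 - j, j)` is odd iff `j = 0`. -/
theorem choose_two_pow_sub_one_odd_iff (b j : ℕ) (h : 2 * j ≤ 2 ^ b - 1) :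
    Odd (Nat.choose (2 ^ b - 1 - j) j) ↔ j = 0 := by
  constructor
  · intro hodd
    by_contra hj
    exact Nat.not_even_iff_odd.mpr hodd (Nat.even_choose_two_pow_sub_one_sub_self hj h)
  · rintro rfl
    simp
end

section
/- For natural numbers b ≥ 1 and j with 2j ≤ 2^b - 2, the binomial coefficient C(2^b - 2 - j, j) is odd if and only if j = 2^c - 1 for some integer c with 0 ≤ c ≤ b - 1. -/
lemma land_eq_zero_iff' (m k : ℕ) :
    m &&& k = 0 ↔ ∀ i, ¬(m.testBit i ∧ k.testBit i) := by
  constructor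
  · intro h i ⟨h1, h2⟩
    have := Nat.testBit_land m k i
    rw [h, Nat.zero_testBit, h1, h2] at this
    simp at this
  · intro h
    apply Nat.eq_of_testBit_eq
    intro i
    rw [Nat.testBit_land, Nat.zero_testBit]
    have := h i
    cases hm : m.testBit i <;> cases hk : k.testBit i <;> simp_all

lemma odd_choose_add_aux : ∀ n m k : ℕ, m + k ≤ n →
    (Odd ((m + k).choose k) ↔ m &&& k = 0)
  | 0, m, k, h => by
    have hm : m = 0 := by omega
    have hk : k = 0 := by omega
    subst hm hk; simp
  | n+1, m, k, h => by
    rcases Nat.eq_zero_or_pos (m + k) with h0 | h0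
    · have hm : m = 0 := by omega
      have hk : k = 0 := by omega
      subst hm hk; simp
    haveI : Fact (Nat.Prime 2) := ⟨Nat.prime_two⟩
    have key := @Choose.choose_modEq_choose_mod_mul_choose_div_nat (m + k) k 2 _
    have hodd : Odd ((m + k).choose k) ↔
        Odd (((m+k) % 2).choose (k % 2)) ∧ Odd (((m+k)/2).choose (k/2)) := by
      rw [Nat.odd_iff, Nat.ModEq] at *
      rw [key]
      rw [← Nat.odd_iff, Nat.odd_mul, Nat.odd_iff, Nat.odd_iff]
    by_cases hboth : m % 2 = 1 ∧ k % 2 = 1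
    · have h1 : (m + k) % 2 = 0 := by omega
      rw [hodd, h1, hboth.2]
      simp only [Nat.choose_eq_zero_of_lt (by norm_num : (0:ℕ) < 1)]
      constructor
      · rintro ⟨h2, -⟩; simp [Nat.odd_iff] at h2
      · intro hland
        exfalso
        rw [land_eq_zero_iff'] at hland
        exact hland 0 ⟨by simp [Nat.testBit_zero, hboth.1], by simp [Nat.testBit_zero, hboth.2]⟩
    · have hdiv : (m + k) / 2 = m / 2 + k / 2 := by omega
      have hone : (((m+k) % 2).choose (k % 2)) = 1 := by
        rcases Nat.mod_two_eq_zero_or_one m with hm | hm <;>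
          rcases Nat.mod_two_eq_zero_or_one k with hk | hk <;>
          simp_all
        all_goals omega
      have hle : m / 2 + k / 2 ≤ n := by omega
      rw [hodd, hone, hdiv, odd_choose_add_aux n (m/2) (k/2) hle]
      have hland : m &&& k = 0 ↔ m / 2 &&& k / 2 = 0 := by
        rw [land_eq_zero_iff', land_eq_zero_iff']
        constructor
        · intro H i hi
          refine H (i+1) ?_
          simpa [Nat.testBit_succ] using hi
        · intro H i
          cases i with
          | zero =>
            simp only [Nat.testBit_zero]
            intro hc
            simp only [decide_eq_true_eq] at hc
            exact hboth ⟨hc.1, hc.2⟩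
          | succ i => simpa [Nat.testBit_succ] using H i
      simp [hland]

lemma odd_choose_add (m k : ℕ) : Odd ((m + k).choose k) ↔ m &&& k = 0 :=
  odd_choose_add_aux (m + k) m k le_rfl

lemma sub_testBit : ∀ n j i : ℕ, j < 2 ^ n →
    (2 ^ n - 1 - j).testBit i = (decide (i < n) && !(j.testBit i))
  | 0, j, i, h => by
    have : j = 0 := by omega
    subst this
    simp
  | n+1, j, i, h => by
    have h2 : 2 ^ (n+1) = 2 * 2 ^ n := by rw [pow_succ]; ring
    have hq : j / 2 < 2 ^ n := by omega
    have h1 : (1:ℕ) ≤ 2 ^ n := Nat.one_le_two_pow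
    have hx : 2 ^ (n+1) - 1 - j = 2 * (2 ^ n - 1 - j / 2) + (1 - j % 2) := by omega
    cases i with
    | zero =>
      rw [hx, Nat.testBit_zero, Nat.testBit_zero]
      have hmod : (2 * (2 ^ n - 1 - j / 2) + (1 - j % 2)) % 2 = 1 - j % 2 := by omega
      rw [hmod]
      rcases Nat.mod_two_eq_zero_or_one j with hr | hr <;> simp [hr]
    | succ i =>
      rw [Nat.testBit_succ, hx]
      have hd : (2 * (2 ^ n - 1 - j / 2) + (1 - j % 2)) / 2 = 2 ^ n - 1 - j / 2 := by omega
      rw [hd, sub_testBit n (j/2) i hq, Nat.testBit_succ]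
      simp [Nat.succ_lt_succ_iff]

lemma downward_closed_eq (j : ℕ)
    (H : ∀ i, j.testBit (i+1) = true → j.testBit i = true) :
    ∃ c, j = 2 ^ c - 1 := by
  induction j using Nat.strong_induction_on with
  | _ j IH =>
    rcases Nat.eq_zero_or_pos j with h0 | h0
    · exact ⟨0, by simp [h0]⟩
    have hb0 : j.testBit 0 = true := by
      by_contra hb
      rw [Bool.not_eq_true] at hb
      have hall : ∀ i, j.testBit i = false := by
        intro i
        induction i with
        | zero => exact hb
        | succ i ih =>
          by_contra hs
          rw [Bool.not_eq_false] at hs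
          rw [H i hs] at ih
          exact absurd ih (by simp)
      have : j = 0 := Nat.eq_of_testBit_eq fun i => by rw [hall i, Nat.zero_testBit]
      omega
    have hlt : j / 2 < j := Nat.div_lt_self h0 one_lt_two
    have H' : ∀ i, (j/2).testBit (i+1) = true → (j/2).testBit i = true := by
      intro i hi
      rw [← Nat.testBit_succ] at *
      exact H (i+1) hi
    obtain ⟨c, hc⟩ := IH (j/2) hlt H'
    have hmod : j % 2 = 1 := by
      rw [Nat.testBit_zero] at hb0
      simpa using hb0
    refine ⟨c + 1, ?_⟩
    have h1 : (1:ℕ) ≤ 2 ^ c := Nat.one_le_two_pow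
    have h2 : 2 ^ (c+1) = 2 * 2 ^ c := by rw [pow_succ]; ring
    omega



/-- Lucas-theorem computation for Lemma 5.1(e): for `b ≥ 1` and `2j ≤ 2^b - 2`,
`C(2^b - 2 - j, j)` is odd iff `j = 2^c - 1` for some `0 ≤ c ≤ b - 1`. -/
theorem choose_two_pow_sub_two_odd_iff (b j : ℕ) (hb : 1 ≤ b) (h : 2 * j ≤ 2 ^ b - 2) :
    Odd (Nat.choose (2 ^ b - 2 - j) j) ↔ ∃ c : ℕ, c ≤ b - 1 ∧ j = 2 ^ c - 1 := by
  have h2 : 2 ^ b = 2 * 2 ^ (b-1) := by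
    conv_lhs => rw [← Nat.succ_pred_eq_of_pos hb]
    rw [pow_succ, Nat.pred_eq_sub_one, mul_comm]
  have hM1 : (1:ℕ) ≤ 2 ^ (b-1) := Nat.one_le_two_pow
  have hjM : j ≤ 2 ^ (b-1) - 1 := by omega
  have hn : 2 ^ b - 2 - j = 2 * ((2 ^ (b-1) - 1) - j) + j := by omega
  rw [hn, odd_choose_add, land_eq_zero_iff']
  constructor
  · intro H
    have Hdc : ∀ i, j.testBit (i+1) = true → j.testBit i = true := by
      intro i hi
      by_contra hf
      rw [Bool.not_eq_true] at hf
      have hib : i < b - 1 := by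
        by_contra hge
        push_neg at hge
        have hjlt : j < 2 ^ (i+1) := by
          calc j ≤ 2 ^ (b-1) - 1 := hjM
          _ < 2 ^ (b-1) := by omega
          _ ≤ 2 ^ (i+1) := Nat.pow_le_pow_right (by norm_num) (by omega)
        rw [Nat.testBit_lt_two_pow hjlt] at hi
        exact absurd hi (by simp)
      refine H (i+1) ⟨?_, hi⟩
      rw [Nat.testBit_succ, Nat.mul_div_cancel_left _ (by norm_num : 0 < 2)]
      rw [sub_testBit (b-1) j i (by omega)]
      simp [hib, hf]
    obtain ⟨c, hc⟩ := downward_closed_eq j Hdc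
    refine ⟨c, ?_, hc⟩
    by_contra hcb
    push_neg at hcb
    have : 2 ^ (b-1) < 2 ^ c := Nat.pow_lt_pow_right one_lt_two hcb
    have : (1:ℕ) ≤ 2 ^ c := Nat.one_le_two_pow
    omega
  · rintro ⟨c, hcb, rfl⟩ i ⟨h1, h2'⟩
    have hic : i < c := by
      have := Nat.testBit_two_pow_sub_one c i
      rw [h2'] at this
      simpa using this.symm
    cases i with
    | zero =>
      rw [Nat.testBit_zero] at h1
      simp only [Nat.mul_mod_right] at h1
      exact absurd h1 (by simp)
    | succ i =>
      rw [Nat.testBit_succ, Nat.mul_div_cancel_left _ (by norm_num : 0 < 2)] at h1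
      have hjlt : 2 ^ c - 1 < 2 ^ (b-1) := by
        have : (2:ℕ) ^ c ≤ 2 ^ (b-1) := Nat.pow_le_pow_right (by norm_num) hcb
        have : (1:ℕ) ≤ 2 ^ c := Nat.one_le_two_pow
        omega
      rw [sub_testBit (b-1) _ i hjlt, Nat.testBit_two_pow_sub_one] at h1
      simp only [Bool.and_eq_true, Bool.not_eq_true', decide_eq_false_iff_not, decide_eq_true_eq] at h1
      omega
end

section
/- The ideal J(d, m-d) = (w̄_k : k > m-d) in Z/2[w_1,...,w_d] is generated by the d elements w̄_{m-d+1}, w̄_{m-d+2}, ..., w̄_{m}. -/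
open Finset MvPolynomial

/-- Lemma 3.2(a): the ideal `J(d, m-d) = (w̄_k : k > m-d)` of `Z/2[w₁,…,w_d]` is generated by the
`d` elements `w̄_{m-d+1}, …, w̄_m`.  Here `X i` (for `i : Fin d`) is `w_{i+1}`, and the classes
`w̄_k` satisfy `w̄₀ = 1` and `w̄_k = ∑_{i=1}^{d} w_i·w̄_{k-i}` for `k ≥ 1`. -/
theorem ideal_J_finitely_generated (d m : ℕ) (hd : 0 < d) (hdm : d ≤ m)
    (wbar : ℕ → MvPolynomial (Fin d) (ZMod 2))
    (h0 : wbar 0 = 1)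
    (hrec : ∀ k, 1 ≤ k →
      wbar k = ∑ i : Fin d, if (i : ℕ) + 1 ≤ k then X i * wbar (k - ((i : ℕ) + 1)) else 0) :
    Ideal.span {p : MvPolynomial (Fin d) (ZMod 2) | ∃ k, m - d < k ∧ p = wbar k}
      = Ideal.span (wbar '' {k | m - d < k ∧ k ≤ m}) := by
  have key : ∀ k, m - d < k →
      wbar k ∈ Ideal.span (wbar '' {k | m - d < k ∧ k ≤ m}) := by
    intro k
    induction k using Nat.strong_induction_on with
    | _ k ih =>
      intro hk
      by_cases hkm : k ≤ m
      · exact Ideal.subset_span ⟨k, ⟨hk, hkm⟩, rfl⟩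
      · push_neg at hkm
        rw [hrec k (by omega)]
        apply Ideal.sum_mem
        intro i _
        have hi := i.isLt
        split
        · next h =>
          exact Ideal.mul_mem_left _ _ (ih _ (by omega) (by omega))
        · exact Ideal.zero_mem _
  apply le_antisymm
  · rw [Ideal.span_le]
    rintro p ⟨k, hk, rfl⟩
    exact key k hk
  · apply Ideal.span_mono
    rintro p ⟨k, ⟨hk1, hk2⟩, rfl⟩
    exact ⟨k, hk1, rfl⟩
end

section
/- Define Q_n on Z/2[w_1, w_2] as the unique derivation (over Z/2) determined by Q_n(w_1) = w_1^{2^{n+1}} and Q_n(w_2) = w_1·w_2·w̄_{2^{n+1}-2}, where w̄_k is given by the standard recursion. Then for all l ≥ 0, Q_n(w_1·w̄_{2l}) = w_1·w̄_{2^{n+1}-1+2l}. -/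
open Finset MvPolynomial

namespace QnAux

abbrev R := MvPolynomial (Fin 2) (ZMod 2)

lemma two_zero : (2 : R) = 0 := CharTwo.two_eq_zero

lemma wbar_rec (k : ℕ) : wbar (k + 2) = X 0 * wbar (k + 1) + X 1 * wbar k := rfl

lemma wbar_double (k : ℕ) :
    wbar (2 * k + 1) = X 0 * (wbar k) ^ 2 ∧
    wbar (2 * k + 2) = (wbar (k + 1)) ^ 2 + X 1 * (wbar k) ^ 2 := by
  induction k with
  | zero =>
    refine ⟨?_, ?_⟩
    · rw [show (2 * 0 + 1 : ℕ) = 1 from rfl, show wbar 1 = X 0 from rfl,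
        show wbar 0 = 1 from rfl]
      ring
    have h : wbar 2 = X 0 * wbar 1 + X 1 * wbar 0 := rfl
    rw [h, show wbar 1 = X 0 from rfl, show wbar 0 = 1 from rfl]
    ring
  | succ k ih =>
    obtain ⟨h1, h2⟩ := ih
    have sqk : (wbar (k + 2)) ^ 2 = (X 0)^2 * (wbar (k+1))^2 + (X 1)^2 * (wbar k)^2 := by
      rw [wbar_rec, CharTwo.add_sq, mul_pow, mul_pow]
    have g1 : wbar (2 * k + 3) = X 0 * (wbar (k + 1)) ^ 2 := by
      have r : wbar (2 * k + 3) = X 0 * wbar (2 * k + 2) + X 1 * wbar (2 * k + 1) :=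
        wbar_rec (2 * k + 1)
      rw [r, h1, h2]
      linear_combination (X 0 * X 1 * (wbar k) ^ 2) * two_zero
    have g2 : wbar (2 * k + 4) = (wbar (k + 2)) ^ 2 + X 1 * (wbar (k + 1)) ^ 2 := by
      have r : wbar (2 * k + 4) = X 0 * wbar (2 * k + 3) + X 1 * wbar (2 * k + 2) :=
        wbar_rec (2 * k + 2)
      rw [r, g1, h2, sqk]
      ring
    exact ⟨by rw [show 2 * (k + 1) + 1 = 2 * k + 3 from by ring]; exact g1,
           by rw [show 2 * (k + 1) + 2 = 2 * k + 4 from by ring]; exact g2⟩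

lemma wbar_pow2 (k : ℕ) : wbar (2 ^ (k + 1) - 1) = X 0 ^ (2 ^ (k + 1) - 1) := by
  induction k with
  | zero => show wbar 1 = X 0 ^ 1; rw [pow_one]; rfl
  | succ k ih =>
    have e : 2 ^ (k + 2) - 1 = 2 * (2 ^ (k + 1) - 1) + 1 := by
      have h2 : 2 ^ (k + 2) = 2 * 2 ^ (k + 1) := by ring
      have : 1 ≤ 2 ^ (k + 1) := Nat.one_le_two_pow
      omega
    rw [e, (wbar_double _).1, ih, ← pow_mul, ← pow_succ']
    congr 1
    have h2 : 2 ^ (k + 2) = 2 * 2 ^ (k + 1) := by ring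
    have : 1 ≤ 2 ^ (k + 1) := Nat.one_le_two_pow
    omega

lemma wbar_four (k : ℕ) : wbar (k + 4) = (X 0)^2 * wbar (k + 2) + (X 1)^2 * wbar k := by
  induction k using Nat.strong_induction_on with
  | _ k ih =>
    match k with
    | 0 =>
      have h4 : wbar 4 = X 0 * wbar 3 + X 1 * wbar 2 := rfl
      have h3 : wbar 3 = X 0 * wbar 2 + X 1 * wbar 1 := rfl
      have h2 : wbar 2 = X 0 * wbar 1 + X 1 * wbar 0 := rfl
      show wbar 4 = (X 0)^2 * wbar 2 + (X 1)^2 * wbar 0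
      rw [h4, h3, h2, show wbar 1 = X 0 from rfl, show wbar 0 = 1 from rfl]
      linear_combination ((X 0)^2 * X 1) * two_zero
    | 1 =>
      have h5 : wbar 5 = X 0 * wbar 4 + X 1 * wbar 3 := rfl
      have h4 : wbar 4 = X 0 * wbar 3 + X 1 * wbar 2 := rfl
      have h3 : wbar 3 = X 0 * wbar 2 + X 1 * wbar 1 := rfl
      have h2 : wbar 2 = X 0 * wbar 1 + X 1 * wbar 0 := rfl
      show wbar 5 = (X 0)^2 * wbar 3 + (X 1)^2 * wbar 1
      rw [h5, h4, h3, h2, show wbar 1 = X 0 from rfl, show wbar 0 = 1 from rfl]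
      linear_combination ((X 0)^3 * X 1 + X 0 * (X 1)^2) * two_zero
    | (k + 2) =>
      have h1 : wbar (k + 4) = (X 0)^2 * wbar (k + 2) + (X 1)^2 * wbar k :=
        ih k (by omega)
      have r5 : wbar (k + 5) = (X 0)^2 * wbar (k + 3) + (X 1)^2 * wbar (k + 1) :=
        ih (k + 1) (by omega)
      have r6 : wbar (k + 6) = X 0 * wbar (k + 5) + X 1 * wbar (k + 4) := wbar_rec (k + 4)
      have r4 : wbar (k + 4) = X 0 * wbar (k + 3) + X 1 * wbar (k + 2) := wbar_rec (k + 2)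
      have r2 : wbar (k + 2) = X 0 * wbar (k + 1) + X 1 * wbar k := wbar_rec k
      show wbar (k + 6) = (X 0)^2 * wbar (k + 4) + (X 1)^2 * wbar (k + 2)
      linear_combination r6 + X 0 * r5 + X 1 * h1 - (X 0)^2 * r4 - (X 1)^2 * r2

lemma Q_sq (Q : Derivation (ZMod 2) R R) (a : R) : Q (a ^ 2) = 0 := by
  rw [sq, Derivation.leibniz]
  exact CharTwo.add_self_eq_zero _

end QnAux

open QnAux in
/-- Proposition 5.8: if `Q_n` is the derivation of `Z/2[w₁,w₂]` with `Q_n(w₁) = w₁^{2^{n+1}}` and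
`Q_n(w₂) = w₁·w₂·w̄_{2^{n+1}-2}`, then `Q_n(w₁·w̄_{2l}) = w₁·w̄_{2^{n+1}-1+2l}` for all `l ≥ 0`. -/
theorem Qn_w1_wbar (n : ℕ)
    (Q : Derivation (ZMod 2) (MvPolynomial (Fin 2) (ZMod 2)) (MvPolynomial (Fin 2) (ZMod 2)))
    (hQ1 : Q (X 0) = X 0 ^ (2 ^ (n + 1)))
    (hQ2 : Q (X 1) = X 0 * X 1 * wbar (2 ^ (n + 1) - 2)) :
    ∀ l : ℕ, Q (X 0 * wbar (2 * l)) = X 0 * wbar (2 ^ (n + 1) - 1 + 2 * l) := by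
  obtain ⟨p, hp⟩ : ∃ p, 2 ^ (n + 1) = p + 2 := by
    have : 2 ≤ 2 ^ (n + 1) := by
      calc 2 = 2 ^ 1 := rfl
      _ ≤ 2 ^ (n + 1) := Nat.pow_le_pow_right (by norm_num) (by omega)
    exact ⟨2 ^ (n + 1) - 2, by omega⟩
  have hwp : wbar (p + 1) = X 0 ^ (p + 1) := by
    have h := wbar_pow2 n
    rwa [show 2 ^ (n + 1) - 1 = p + 1 from by omega] at h
  rw [hp] at hQ1 hQ2 ⊢
  rw [show p + 2 - 2 = p from by omega] at hQ2
  simp only [show p + 2 - 1 = p + 1 from by omega]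
  suffices H : ∀ l : ℕ, Q (X 0 * wbar (2 * l)) = X 0 * wbar (p + 1 + 2 * l) ∧
      Q (X 0 * wbar (2 * (l + 1))) = X 0 * wbar (p + 1 + 2 * (l + 1)) from fun l => (H l).1
  have P0 : Q (X 0 * wbar (2 * 0)) = X 0 * wbar (p + 1 + 2 * 0) := by
    rw [show (2 * 0 : ℕ) = 0 from rfl, show wbar 0 = 1 from rfl, mul_one, hQ1,
      show p + 1 + 2 * 0 = p + 1 from by omega, hwp]
    exact pow_succ' (X 0) (p + 1)
  have P1 : Q (X 0 * wbar (2 * 1)) = X 0 * wbar (p + 1 + 2 * 1) := by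
    rw [show (2 * 1 : ℕ) = 2 from rfl, show p + 1 + 2 * 1 = p + 3 from by omega]
    have hw2 : wbar 2 = X 0 ^ 2 + X 1 := by
      rw [show wbar 2 = X 0 * wbar 1 + X 1 * wbar 0 from rfl,
        show wbar 1 = X 0 from rfl, show wbar 0 = 1 from rfl]
      ring
    have r3 : wbar (p + 3) = X 0 * wbar (p + 2) + X 1 * wbar (p + 1) := wbar_rec (p + 1)
    have r2 : wbar (p + 2) = X 0 * wbar (p + 1) + X 1 * wbar p := wbar_rec p
    rw [hw2, Derivation.leibniz, map_add, Q_sq, zero_add, hQ1, hQ2]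
    simp only [smul_eq_mul]
    rw [r3, r2, hwp]
    ring
  have step : ∀ l, Q (X 0 * wbar (2 * l)) = X 0 * wbar (p + 1 + 2 * l) →
      Q (X 0 * wbar (2 * (l + 1))) = X 0 * wbar (p + 1 + 2 * (l + 1)) →
      Q (X 0 * wbar (2 * (l + 2))) = X 0 * wbar (p + 1 + 2 * (l + 2)) := by
    intro l h0 h1
    rw [show 2 * (l + 1) = 2 * l + 2 from by ring] at h1
    rw [show p + 1 + (2 * l + 2) = p + 1 + 2 * l + 2 from by omega] at h1
    rw [show 2 * (l + 2) = 2 * l + 4 from by ring]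
    rw [show p + 1 + (2 * l + 4) = p + 1 + 2 * l + 4 from by omega]
    rw [wbar_four (2 * l), wbar_four (p + 1 + 2 * l),
      show X 0 * ((X 0)^2 * wbar (2 * l + 2) + (X 1)^2 * wbar (2 * l)) =
        (X 0)^2 * (X 0 * wbar (2 * l + 2)) + (X 1)^2 * (X 0 * wbar (2 * l)) from by ring,
      map_add, Derivation.leibniz Q ((X 0)^2) (X 0 * wbar (2 * l + 2)),
      Derivation.leibniz Q ((X 1)^2) (X 0 * wbar (2 * l)), Q_sq, Q_sq, h0, h1]
    simp only [smul_eq_mul, mul_zero, zero_mul, smul_zero, add_zero]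
    ring
  intro l
  induction l with
  | zero => exact ⟨P0, P1⟩
  | succ l ih => exact ⟨ih.2, step l ih.1 ih.2⟩
end
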